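/- Let \Gamma be an imbrex geometry of symplectic rank 2. Let x, q1, q2 be points with q1 collinear to q2, and suppose no point of the line q1 q2 is collinear with x. Then some point of the line L = \xi(x,q1) \cap \xi(x,q2) is collinear with all points of the line q1 q2. -/

import Mathlib

/-!
By (Imb), `ξ(x,q₁) ∩ ξ(x,q₂)` is a maximal singular subspace of the polar space `ξ(x,q₁)`, which
has rank at least 2, so it contains a line `N`. In a polar space every point is collinear with
some point `z` of every line; take this for `q₁` and `N`. If `z` is collinear with `q₂` as well,
then `z` sees two points of the line `q₁q₂` and hence all of them. Otherwise `q₁` is a common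
neighbour of the non-collinear points `z, q₂ ∈ ξ(x,q₂)`, so convexity puts `q₁` itself in
`ξ(x,q₂)`, and `q₁` does the job.
-/

namespace ImbrexGeom

variable {P : Type*}

/-- Two points are collinear: equal or on a common line. -/
def Col (Ls : Set (Set P)) (x y : P) : Prop :=
  x = y ∨ ∃ L ∈ Ls, x ∈ L ∧ y ∈ L

/-- A line of the geometry induced on a subset `S`. -/
def LineIn (Ls : Set (Set P)) (S : Set P) (L : Set P) : Prop :=
  L ∈ Ls ∧ L ⊆ S

/-- Collinearity inside the geometry induced on `S`. -/
def ColIn (Ls : Set (Set P)) (S : Set P) (x y : P) : Prop :=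
  x = y ∨ ∃ L, LineIn Ls S L ∧ x ∈ L ∧ y ∈ L

/-- A subspace of the geometry induced on `S`. -/
def IsSubspaceIn (Ls : Set (Set P)) (S T : Set P) : Prop :=
  T ⊆ S ∧ ∀ L, LineIn Ls S L → ∀ x ∈ L, ∀ y ∈ L, x ≠ y → x ∈ T → y ∈ T → L ⊆ T

def IsSubspace (Ls : Set (Set P)) (T : Set P) : Prop :=
  IsSubspaceIn Ls Set.univ T

/-- A convex subspace (adapted to diameter 2): closed under taking common
neighbours of non-collinear pairs, i.e. all points on shortest paths. -/
def IsConvex (Ls : Set (Set P)) (S : Set P) : Prop :=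
  IsSubspace Ls S ∧ ∀ x ∈ S, ∀ y ∈ S, ¬ Col Ls x y →
    ∀ z, Col Ls x z → Col Ls z y → z ∈ S

/-- `S` is the smallest convex subspace containing `x` and `y`. -/
def SmallestConvex (Ls : Set (Set P)) (x y : P) (S : Set P) : Prop :=
  IsConvex Ls S ∧ x ∈ S ∧ y ∈ S ∧
    ∀ S', IsConvex Ls S' → x ∈ S' → y ∈ S' → S ⊆ S'

/-- A singular subspace of the geometry induced on `S`. -/
def IsSingularIn (Ls : Set (Set P)) (S T : Set P) : Prop :=
  IsSubspaceIn Ls S T ∧ ∀ x ∈ T, ∀ y ∈ T, ColIn Ls S x y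

def IsSingular (Ls : Set (Set P)) (T : Set P) : Prop :=
  IsSingularIn Ls Set.univ T

/-- A maximal singular subspace of the geometry induced on `S`. -/
def MaxSingularIn (Ls : Set (Set P)) (S T : Set P) : Prop :=
  IsSingularIn Ls S T ∧ ∀ T', IsSingularIn Ls S T' → T ⊆ T' → T' = T

/-- A block: a maximal singular subspace of the whole geometry. -/
def IsBlock (Ls : Set (Set P)) (B : Set P) : Prop :=
  MaxSingularIn Ls Set.univ B

/-- The geometry induced on `S` has polar rank `r`: every nested (strictly
increasing) sequence of singular subspaces has length at most `r + 1`, and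
one of length `r + 1` exists. -/
def HasPolarRank (Ls : Set (Set P)) (S : Set P) (r : ℕ) : Prop :=
  (∀ n : ℕ, ∀ f : Fin n → Set P, (∀ i, IsSingularIn Ls S (f i)) →
      (∀ i j, i < j → f i ⊂ f j) → n ≤ r + 1) ∧
  ∃ f : Fin (r + 1) → Set P, (∀ i, IsSingularIn Ls S (f i)) ∧
      ∀ i j : Fin (r + 1), i < j → f i ⊂ f j

/-- The geometry induced on `S` is a polar space of rank `r`
(Buekenhout–Shult axioms). -/
def IsPolarSpace (Ls : Set (Set P)) (S : Set P) (r : ℕ) : Prop :=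
  (∀ L, LineIn Ls S L → ∃ x ∈ L, ∃ y ∈ L, ∃ z ∈ L, x ≠ y ∧ x ≠ z ∧ y ≠ z) ∧
  (∀ x ∈ S, ∃ y ∈ S, ¬ ColIn Ls S x y) ∧
  HasPolarRank Ls S r ∧
  (∀ x ∈ S, ∀ L, LineIn Ls S L → x ∉ L →
      (∃! y, y ∈ L ∧ ColIn Ls S x y) ∨ ∀ y ∈ L, ColIn Ls S x y)

/-- A strong parapolar space of diameter 2. -/
structure StrongParapolar2 (Ls : Set (Set P)) : Prop where
  connected : ∀ x y : P, Relation.ReflTransGen (Col Ls) x y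
  pps1 : ∀ x : P, ∀ L ∈ Ls, x ∉ L →
      (∀ y ∈ L, ¬ Col Ls x y) ∨ (∃! y, y ∈ L ∧ Col Ls x y) ∨ ∀ y ∈ L, Col Ls x y
  pps1_none : ∃ x : P, ∃ L ∈ Ls, ∀ y ∈ L, ¬ Col Ls x y
  pps1_one : ∃ x : P, ∃ L ∈ Ls, x ∉ L ∧ ∃! y, y ∈ L ∧ Col Ls x y
  pps1_all : ∃ x : P, ∃ L ∈ Ls, x ∉ L ∧ ∀ y ∈ L, Col Ls x y
  pps2 : ∀ x y : P, ¬ Col Ls x y →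
      ∃ S, SmallestConvex Ls x y S ∧ ∃ r, 2 ≤ r ∧ IsPolarSpace Ls S r

/-- A symplecton: the smallest convex subspace of a non-collinear pair. -/
def IsSymp (Ls : Set (Set P)) (S : Set P) : Prop :=
  ∃ x y, ¬ Col Ls x y ∧ SmallestConvex Ls x y S

/-- (PPS4): every nested sequence of singular subspaces has finite length. -/
def PPS4 (Ls : Set (Set P)) : Prop :=
  ∀ f : ℕ → Set P, (∀ n, IsSingular Ls (f n)) → ¬ ∀ n, f n ⊂ f (n + 1)

/-- The imbrex axiom (Imb). -/
def Imb (Ls : Set (Set P)) : Prop :=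
  ∀ x : P, ∀ L ∈ Ls, (∀ y ∈ L, ¬ Col Ls x y) →
    ∀ y₁ ∈ L, ∀ y₂ ∈ L, y₁ ≠ y₂ →
      ∀ S₁ S₂, SmallestConvex Ls x y₁ S₁ → SmallestConvex Ls x y₂ S₂ →
        MaxSingularIn Ls S₁ (S₁ ∩ S₂) ∧ MaxSingularIn Ls S₂ (S₁ ∩ S₂)

/-- An imbrex geometry. -/
structure ImbrexGeometry (Ls : Set (Set P)) : Prop where
  spp : StrongParapolar2 Ls
  pps4 : PPS4 Ls
  imb : Imb Ls

/-- The geometry has symplectic rank `r`: all symplecta have polar rank `r`. -/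
def SympRank (Ls : Set (Set P)) (r : ℕ) : Prop :=
  ∀ S, IsSymp Ls S → HasPolarRank Ls S r

/-- All symplecta are thick generalized quadrangles: every point of a
symplecton lies on at least three lines of it (lines already have at least
three points by the polar space axioms). -/
def ThickSymps (Ls : Set (Set P)) : Prop :=
  ∀ S, IsSymp Ls S → ∀ x ∈ S, ∃ L₁ L₂ L₃, LineIn Ls S L₁ ∧ LineIn Ls S L₂ ∧
    LineIn Ls S L₃ ∧ L₁ ≠ L₂ ∧ L₁ ≠ L₃ ∧ L₂ ≠ L₃ ∧ x ∈ L₁ ∧ x ∈ L₂ ∧ x ∈ L₃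

/-- The perp of a set of lines in the geometry induced on `S`: all lines of
`S` concurrent with every member of the set. -/
def PerpSet (Ls : Set (Set P)) (S : Set P) (T : Set (Set P)) : Set (Set P) :=
  {N | LineIn Ls S N ∧ ∀ M ∈ T, (N ∩ M).Nonempty}

/-- A pair of lines is regular. -/
def RegularPair (Ls : Set (Set P)) (S : Set P) (L M : Set P) : Prop :=
  ∃ L' M', L' ∈ PerpSet Ls S {L, M} ∧ M' ∈ PerpSet Ls S {L, M} ∧ L' ≠ M' ∧
    PerpSet Ls S (PerpSet Ls S {L, M}) = PerpSet Ls S {L', M'}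

/-- `N` is a member of the spread of the symplecton `H` induced by the
block `B`: `N = B' ∩ H` for some block `B'` meeting `B`. -/
def InSpreadOf (Ls : Set (Set P)) (H B : Set P) (N : Set P) : Prop :=
  ∃ B', IsBlock Ls B' ∧ (B' ∩ B).Nonempty ∧ N = B' ∩ H

section Lemmas

variable {Ls : Set (Set P)}

theorem Col.symm {x y : P} (h : Col Ls x y) : Col Ls y x := by
  rcases h with h | ⟨L, hL, hx, hy⟩
  · exact Or.inl h.symm
  · exact Or.inr ⟨L, hL, hy, hx⟩

theorem ColIn.symm {S : Set P} {x y : P} (h : ColIn Ls S x y) : ColIn Ls S y x := by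
  rcases h with h | ⟨L, hL, hx, hy⟩
  · exact Or.inl h.symm
  · exact Or.inr ⟨L, hL, hy, hx⟩

theorem ColIn.col {S : Set P} {x y : P} (h : ColIn Ls S x y) : Col Ls x y := by
  rcases h with h | ⟨L, hL, hx, hy⟩
  · exact Or.inl h
  · exact Or.inr ⟨L, hL.1, hx, hy⟩

theorem SmallestConvex.unique {x y : P} {S S' : Set P} (h : SmallestConvex Ls x y S)
    (h' : SmallestConvex Ls x y S') : S = S' :=
  (h.2.2.2 S' h'.1 h'.2.1 h'.2.2.1).antisymm (h'.2.2.2 S h.1 h.2.1 h.2.2.1)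

theorem IsSubspaceIn.inter {S T T' : Set P} (hT : IsSubspaceIn Ls S T)
    (hT' : IsSubspaceIn Ls S T') : IsSubspaceIn Ls S (T ∩ T') :=
  ⟨fun _ hw => hT.1 hw.1, fun N hN a ha b hb hab haT hbT =>
    Set.subset_inter (hT.2 N hN a ha b hb hab haT.1 hbT.1)
      (hT'.2 N hN a ha b hb hab haT.2 hbT.2)⟩

def perp (Ls : Set (Set P)) (S A : Set P) : Set P :=
  {w | w ∈ S ∧ ∀ v ∈ A, ColIn Ls S w v}

namespace IsPolarSpace

variable {S : Set P} {r : ℕ}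

theorem exists_ne_of_lineIn (hP : IsPolarSpace Ls S r) {N : Set P} (hN : LineIn Ls S N) :
    ∃ a ∈ N, ∃ b ∈ N, a ≠ b := by
  obtain ⟨a, ha, b, hb, -, -, hab, -, -⟩ := hP.1 N hN
  exact ⟨a, ha, b, hb, hab⟩

theorem colIn_of_colIn_of_colIn (hP : IsPolarSpace Ls S r) {p : P} (hp : p ∈ S) {N : Set P}
    (hN : LineIn Ls S N) (hpN : p ∉ N) {u u' : P} (hu : u ∈ N) (hu' : u' ∈ N) (huu' : u ≠ u')
    (hpu : ColIn Ls S p u) (hpu' : ColIn Ls S p u') : ∀ w ∈ N, ColIn Ls S p w := by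
  rcases hP.2.2.2 p hp N hN hpN with ⟨_, _, huniq⟩ | hall
  · exact absurd ((huniq u ⟨hu, hpu⟩).trans (huniq u' ⟨hu', hpu'⟩).symm) huu'
  · exact hall

theorem exists_colIn_of_lineIn (hP : IsPolarSpace Ls S r) {p : P} (hp : p ∈ S) {N : Set P}
    (hN : LineIn Ls S N) :    ∃ y ∈ N, ColIn Ls S p y := by
  by_cases hpN : p ∈ N
  · exact ⟨p, hpN, Or.inl rfl⟩
  rcases hP.2.2.2 p hp N hN hpN with ⟨y, hy, -⟩ | hall
  · exact ⟨y, hy⟩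
  · obtain ⟨a, ha, -⟩ := hP.exists_ne_of_lineIn hN
    exact ⟨a, ha, hall a ha⟩

theorem exists_lineIn (hP : IsPolarSpace Ls S r) (hr : 2 ≤ r) : ∃ N, LineIn Ls S N := by
  obtain ⟨f, hsing, hchain⟩ := hP.2.2.1.2
  have h01 : f ⟨0, by omega⟩ ⊂ f ⟨1, by omega⟩ := hchain _ _ (by simp [Fin.lt_def])
  have h12 : f ⟨1, by omega⟩ ⊂ f ⟨2, by omega⟩ := hchain _ _ (by simp [Fin.lt_def])
  obtain ⟨a, ha, -⟩ := Set.exists_of_ssubset h01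
  obtain ⟨b, hb, hba⟩ := Set.exists_of_ssubset h12
  rcases (hsing _).2 a (h12.1 ha) b hb with rfl | ⟨N, hN, -, -⟩
  · exact absurd ha hba
  · exact ⟨N, hN⟩

theorem exists_lineIn_mem (hP : IsPolarSpace Ls S r) (hr : 2 ≤ r) {p : P} (hp : p ∈ S) :
    ∃ N, LineIn Ls S N ∧ p ∈ N := by
  obtain ⟨N, hN⟩ := hP.exists_lineIn hr
  obtain ⟨y, hyN, hpy | ⟨N', hN', hpN', -⟩⟩ := hP.exists_colIn_of_lineIn hp hN
  · exact ⟨N, hN, hpy ▸ hyN⟩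
  · exact ⟨N', hN', hpN'⟩

theorem isSubspaceIn_perp (hP : IsPolarSpace Ls S r) {A : Set P} (hA : A ⊆ S) :
    IsSubspaceIn Ls S (perp Ls S A) := by
  refine ⟨fun w hw => hw.1, fun N hN a ha b hb hab haA hbA w hw => ⟨hN.2 hw, fun v hv => ?_⟩⟩
  by_cases hvN : v ∈ N
  · exact Or.inr ⟨N, hN, hw, hvN⟩
  · exact (hP.colIn_of_colIn_of_colIn (hA hv) hN hvN ha hb hab
      (haA.2 v hv).symm (hbA.2 v hv).symm w hw).symm

/-- Lines need not be determined by two of their points, so a line need not be a subspace;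
`A^⊥ ∩ A^⊥⊥` is a singular subspace containing `A` regardless. -/
theorem exists_isSingularIn_superset (hP : IsPolarSpace Ls S r) {A : Set P} (hA : A ⊆ S)
    (hAA : ∀ a ∈ A, ∀ b ∈ A, ColIn Ls S a b) : ∃ T, IsSingularIn Ls S T ∧ A ⊆ T := by
  have hAperp : A ⊆ perp Ls S A := fun a ha => ⟨hA ha, hAA a ha⟩
  have hperpS : perp Ls S A ⊆ S := fun w hw => hw.1
  refine ⟨perp Ls S A ∩ perp Ls S (perp Ls S A),
    ⟨(hP.isSubspaceIn_perp hA).inter (hP.isSubspaceIn_perp hperpS),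
      fun a ha b hb => ha.2.2 b hb.1⟩,
    fun a ha => ⟨hAperp ha, hA ha, fun w hw => (hw.2 a ha).symm⟩⟩

theorem exists_lineIn_subset_of_maxSingularIn (hP : IsPolarSpace Ls S r) (hr : 2 ≤ r)
    {K : Set P} (hK : MaxSingularIn Ls S K) (hK₀ : K.Nonempty) : ∃ N, LineIn Ls S N ∧ N ⊆ K := by
  have htwo : ∃ u ∈ K, ∃ v ∈ K, u ≠ v := by
    obtain ⟨p, hp⟩ := hK₀
    by_contra! hKp
    obtain ⟨N, hN, hpN⟩ := hP.exists_lineIn_mem hr (hK.1.1.1 hp)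
    obtain ⟨T, hT, hNT⟩ := hP.exists_isSingularIn_superset hN.2
      fun a ha b hb => Or.inr ⟨N, hN, ha, hb⟩
    have hKT : K ⊆ T := fun u hu => hNT (hKp u hu p hp ▸ hpN)
    obtain ⟨a, ha, b, hb, hab⟩ := hP.exists_ne_of_lineIn hN
    have hNK : N ⊆ K := hK.2 T hT hKT ▸ hNT
    exact hab ((hKp a (hNK ha) p hp).trans (hKp b (hNK hb) p hp).symm)
  obtain ⟨u, hu, v, hv, huv⟩ := htwo
  obtain rfl | ⟨N, hN, huN, hvN⟩ := hK.1.2 u hu v hv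
  · exact absurd rfl huv
  · exact ⟨N, hN, hK.1.1.2 N hN u huN v hvN huv hu hv⟩

end IsPolarSpace

theorem StrongParapolar2.col_of_col_of_col (hΓ : StrongParapolar2 Ls) {M : Set P}
    (hM : M ∈ Ls) {q₁ q₂ z : P} (hq₁ : q₁ ∈ M) (hq₂ : q₂ ∈ M) (hne : q₁ ≠ q₂) (hz₁ : Col Ls z q₁)
    (hz₂ : Col Ls z q₂) : ∀ y ∈ M, Col Ls z y := by
  intro y hy
  by_cases hzM : z ∈ M
  · exact Or.inr ⟨M, hM, hzM, hy⟩
  rcases hΓ.pps1 z M hM hzM with hnone | ⟨_, -, huniq⟩ | hall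
  · exact absurd hz₁ (hnone q₁ hq₁)
  · exact absurd ((huniq q₁ ⟨hq₁, hz₁⟩).trans (huniq q₂ ⟨hq₂, hz₂⟩).symm) hne
  · exact hall y hy

end Lemmas

theorem point_collinear_with_line_general (Ls : Set (Set P)) (hΓ : ImbrexGeometry Ls)
    (x q₁ q₂ : P) (M : Set P) (hM : M ∈ Ls)
    (hq₁ : q₁ ∈ M) (hq₂ : q₂ ∈ M) (hne : q₁ ≠ q₂)
    (hnc : ∀ y ∈ M, ¬ Col Ls x y)
    (S₁ S₂ : Set P) (hS₁ : SmallestConvex Ls x q₁ S₁)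
    (hS₂ : SmallestConvex Ls x q₂ S₂) :
    ∃ z ∈ S₁ ∩ S₂, ∀ y ∈ M, Col Ls z y := by
  obtain ⟨S, hS, r, hr, hPS⟩ := hΓ.spp.pps2 x q₁ (hnc q₁ hq₁)
  rw [hS.unique hS₁] at hPS
  have hK := (hΓ.imb x M hM hnc q₁ hq₁ q₂ hq₂ hne S₁ S₂ hS₁ hS₂).1
  obtain ⟨N, hN, hNK⟩ :=
    hPS.exists_lineIn_subset_of_maxSingularIn hr hK ⟨x, hS₁.2.1, hS₂.2.1⟩
  obtain ⟨z, hzN, hq₁z⟩ := hPS.exists_colIn_of_lineIn hS₁.2.2.1 hN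
  have hzq₁ : Col Ls z q₁ := hq₁z.col.symm
  have hq₁q₂ : Col Ls q₁ q₂ := Or.inr ⟨M, hM, hq₁, hq₂⟩
  by_cases hzq₂ : Col Ls z q₂
  · exact ⟨z, hNK hzN, hΓ.spp.col_of_col_of_col hM hq₁ hq₂ hne hzq₁ hzq₂⟩
  · have hq₁S₂ : q₁ ∈ S₂ := hS₂.1.2 z (hNK hzN).2 q₂ hS₂.2.2.1 hzq₂ q₁ hzq₁ hq₁q₂
    exact ⟨q₁, ⟨hS₁.2.2.1, hq₁S₂⟩,
      hΓ.spp.col_of_col_of_col hM hq₁ hq₂ hne (Or.inl rfl) hq₁q₂⟩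

/-- In an imbrex geometry of symplectic rank 2, if no point of the line
`q₁q₂` is collinear with `x`, then some point of `ξ(x,q₁) ∩ ξ(x,q₂)` is
collinear with all points of `q₁q₂`. -/
theorem point_collinear_with_line (Ls : Set (Set P)) (hΓ : ImbrexGeometry Ls)
    (hrk : SympRank Ls 2) (x q₁ q₂ : P) (M : Set P) (hM : M ∈ Ls)
    (hq₁ : q₁ ∈ M) (hq₂ : q₂ ∈ M) (hne : q₁ ≠ q₂)
    (hnc : ∀ y ∈ M, ¬ Col Ls x y)
    (S₁ S₂ : Set P) (hS₁ : SmallestConvex Ls x q₁ S₁)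
    (hS₂ : SmallestConvex Ls x q₂ S₂) :
    ∃ z ∈ S₁ ∩ S₂, ∀ y ∈ M, Col Ls z y :=
  point_collinear_with_line_general Ls hΓ x q₁ q₂ M hM hq₁ hq₂ hne hnc S₁ S₂ hS₁ hS₂

end ImbrexGeom
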